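/- arXiv:1210.7050 — 4 statements merged into one kernel-verified Lean document; each statement's English description precedes it below -/
import Mathlib

section
/- Let A be a closed subset of the plane ℝ², and let x, y ∈ ℝ² ∖ A be points lying in different connected components of ℝ² ∖ A. Then there exists a connected component K of A such that x and y lie in different connected components of ℝ² ∖ K. -/
/-!
By Zorn's lemma there is a minimal closed subset `M ⊆ A` separating `x` from `y`: a path joining
`x` to `y` off the intersection of a chain of closed sets is compact, hence already misses one
member of the chain. Janiszewski's theorem (if neither of two disjoint closed sets separates `x`
from `y`, neither does their union) makes `M` connected, so the component of `A` containing `M`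
separates `x` from `y` too.

Janiszewski's theorem in `ℂ` follows from Eilenberg's criterion: a closed `K` does not separate `a`
from `b` iff `(z - a) / (z - b)` has a continuous logarithm on `K` tending to `0` at infinity.
For nearby points the principal branch will do, and the existence of such a logarithm is an
equivalence relation, so it holds throughout the component of `a`; logarithms on disjoint closed
sets glue. Conversely, extend the logarithm by the principal branch near infinity and then to all
of `ℂ` (Tietze) as `G`; if the component `U` of `a` missed `b`, the function equal to
`(z - b) exp (G z)` on `U` and to `z - a` off `U` would be continuous and nonvanishing on `ℂ`,
hence have a logarithm, and so would `z - a` on a large circle around `a`, which is impossible.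
-/

open Set Filter Metric Topology Bornology

section Separation

variable {X Y : Type*} [TopologicalSpace X] [TopologicalSpace Y]

def Separates (C : Set X) (x y : X) : Prop :=
  connectedComponentIn Cᶜ x ≠ connectedComponentIn Cᶜ y

def HasJaniszewskiProperty (X : Type*) [TopologicalSpace X] : Prop :=
  ∀ ⦃P Q : Set X⦄, IsClosed P → IsClosed Q → Disjoint P Q → ∀ ⦃x y : X⦄, y ∉ P ∪ Q →
    ¬ Separates P x y → ¬ Separates Q x y → ¬ Separates (P ∪ Q) x y

lemma JoinedIn.connectedComponentIn_eq {U : Set X} {x y : X} (h : JoinedIn U x y) :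
    connectedComponentIn U x = connectedComponentIn U y := by
  obtain ⟨γ, hγ⟩ := h
  refine _root_.connectedComponentIn_eq ?_
  exact (isConnected_range γ.continuous).isPreconnected.subset_connectedComponentIn
    ⟨0, γ.source⟩ (range_subset_iff.mpr hγ) ⟨1, γ.target⟩

lemma IsOpen.joinedIn_of_mem_connectedComponentIn [LocallyPathConnectedSpace X] {U : Set X}
    (hU : IsOpen U) {x y : X} (hy : y ∈ connectedComponentIn U x) : JoinedIn U x y := by
  have hx : x ∈ U := connectedComponentIn_nonempty_iff.mp ⟨y, hy⟩
  have hpath : IsPathConnected (connectedComponentIn U x) :=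
    hU.connectedComponentIn.isConnected_iff_isPathConnected.mp
      (isConnected_connectedComponentIn_iff.mpr hx)
  exact (hpath.joinedIn x (mem_connectedComponentIn hx) y hy).mono
    (connectedComponentIn_subset U x)

lemma IsOpen.frontier_connectedComponentIn_subset [LocallyConnectedSpace X] {U : Set X}
    (hU : IsOpen U) (x : X) : frontier (connectedComponentIn U x) ⊆ Uᶜ := by
  intro z hz hzU
  rw [hU.connectedComponentIn.frontier_eq] at hz
  obtain ⟨w, hwz, hwx⟩ := mem_closure_iff.mp hz.1 _ hU.connectedComponentIn
    (mem_connectedComponentIn hzU)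
  exact hz.2 ((connectedComponentIn_eq hwx).trans (connectedComponentIn_eq hwz).symm ▸
    mem_connectedComponentIn hzU)

lemma Separates.mono {C D : Set X} {x y : X} (h : Separates C x y) (hCD : C ⊆ D) (hy : y ∉ D) :
    Separates D x y := by
  intro hD
  have hyC : y ∈ connectedComponentIn Cᶜ x :=
    connectedComponentIn_mono x (compl_subset_compl.mpr hCD) (hD ▸ mem_connectedComponentIn hy)
  exact h (connectedComponentIn_eq hyC)

lemma not_separates_empty [PreconnectedSpace X] (x y : X) : ¬ Separates (∅ : Set X) x y := by
  simp [Separates, connectedComponentIn_univ, PreconnectedSpace.connectedComponent_eq_univ]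

lemma Homeomorph.image_connectedComponentIn' (e : X ≃ₜ Y) (s : Set X) (x : X) :
    e '' connectedComponentIn s x = connectedComponentIn (e '' s) (e x) := by
  by_cases hx : x ∈ s
  · exact e.image_connectedComponentIn hx
  · rw [connectedComponentIn_eq_empty hx, connectedComponentIn_eq_empty
      (e.injective.mem_set_image.not.mpr hx), image_empty]

lemma Homeomorph.separates_image_iff (e : X ≃ₜ Y) {C : Set X} {x y : X} :
    Separates (e '' C) (e x) (e y) ↔ Separates C x y := by
  simp only [Separates, ← e.image_compl, ← e.image_connectedComponentIn', ne_eq,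
    e.injective.image_injective.eq_iff]

lemma Homeomorph.separates_preimage_iff (e : X ≃ₜ Y) {C : Set Y} {x y : Y} :
    Separates (e ⁻¹' C) (e.symm x) (e.symm y) ↔ Separates C x y := by
  rw [← e.separates_image_iff, e.image_preimage, e.apply_symm_apply, e.apply_symm_apply]

lemma HasJaniszewskiProperty.of_homeomorph (h : HasJaniszewskiProperty X) (e : X ≃ₜ Y) :
    HasJaniszewskiProperty Y := by
  intro P Q hP hQ hPQ x y hy hsP hsQ
  rw [← e.separates_preimage_iff] at hsP hsQ ⊢
  rw [preimage_union]
  exact h (hP.preimage e.continuous) (hQ.preimage e.continuous) (hPQ.preimage e)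
    (by rwa [← preimage_union, mem_preimage, e.apply_symm_apply]) hsP hsQ

lemma separates_sInter_of_isChain [LocallyPathConnectedSpace X] {c : Set (Set X)} {x y : X}
    (hchain : IsChain (· ⊆ ·) c) (hne : c.Nonempty) (hclosed : ∀ S ∈ c, IsClosed S)
    (hsep : ∀ S ∈ c, Separates S x y) (hy : y ∉ ⋂₀ c) : Separates (⋂₀ c) x y := by
  intro heq
  obtain ⟨γ, hγ⟩ := (isClosed_sInter hclosed).isOpen_compl.joinedIn_of_mem_connectedComponentIn
    (by rw [heq]; exact mem_connectedComponentIn hy)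
  have : Nonempty c := hne.to_subtype
  -- By compactness of the path, a single member of the chain already misses it.
  obtain ⟨⟨S, hSc⟩, hS⟩ := (isCompact_range γ.continuous).elim_directed_family_closed
    (fun S : c ↦ (S : Set X)) (fun S ↦ hclosed S S.2)
    (by rw [← sInter_eq_iInter, eq_empty_iff_forall_notMem]; rintro _ ⟨⟨t, rfl⟩, ht⟩; exact hγ t ht)
    fun S T ↦ (hchain.total S.2 T.2).elim (fun h ↦ ⟨S, subset_rfl, h⟩) fun h ↦ ⟨T, h, subset_rfl⟩
  refine hsep S hSc (JoinedIn.connectedComponentIn_eq ⟨γ, fun t ht ↦ ?_⟩)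
  exact hS.subset ⟨mem_range_self t, ht⟩

lemma exists_minimal_separates [LocallyPathConnectedSpace X] {A : Set X} (hA : IsClosed A)
    {x y : X} (hy : y ∉ A) (hsep : Separates A x y) :
    ∃ M ⊆ A, Minimal (fun S ↦ S ⊆ A ∧ IsClosed S ∧ Separates S x y) M := by
  refine zorn_superset_nonempty {S | S ⊆ A ∧ IsClosed S ∧ Separates S x y}
    (fun c hc hchain hne ↦ ⟨⋂₀ c, ⟨?_, ?_, ?_⟩, fun S hS ↦ sInter_subset_of_mem hS⟩)
    A ⟨subset_rfl, hA, hsep⟩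
  · obtain ⟨S, hS⟩ := hne
    exact (sInter_subset_of_mem hS).trans (hc hS).1
  · exact isClosed_sInter fun S hS ↦ (hc hS).2.1
  · obtain ⟨S, hS⟩ := hne
    exact separates_sInter_of_isChain hchain ⟨S, hS⟩ (fun S hS ↦ (hc hS).2.1)
      (fun S hS ↦ (hc hS).2.2) fun h ↦ hy ((hc hS).1 (h S hS))

lemma isPreconnected_of_minimal_separates (hX : HasJaniszewskiProperty X) {A M : Set X}
    {x y : X} (hy : y ∉ A)
    (hM : Minimal (fun S ↦ S ⊆ A ∧ IsClosed S ∧ Separates S x y) M) : IsPreconnected M := by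
  obtain ⟨⟨hMA, hMc, hMsep⟩, hmin⟩ := hM
  have proper : ∀ S ⊆ M, IsClosed S → (M \ S).Nonempty → ¬ Separates S x y :=
    fun S hSM hS ⟨z, hzM, hzS⟩ hsep ↦ hzS (hmin ⟨hSM.trans hMA, hS, hsep⟩ hSM hzM)
  rw [isPreconnected_closed_iff]
  intro t t' ht ht' hcover ⟨p, hpM, hpt⟩ ⟨q, hqM, hqt'⟩
  by_contra hdisj
  rw [not_nonempty_iff_eq_empty, inter_inter_distrib_left, ← disjoint_iff_inter_eq_empty] at hdisj
  have hunion : M ∩ t ∪ M ∩ t' = M := by rw [← inter_union_distrib_left, inter_eq_left.mpr hcover]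
  refine hX (hMc.inter ht) (hMc.inter ht') hdisj (fun h ↦ hy (hMA (hunion ▸ h)))
    (proper _ inter_subset_left (hMc.inter ht) ⟨q, hqM, fun h ↦ ?_⟩)
    (proper _ inter_subset_left (hMc.inter ht') ⟨p, hpM, fun h ↦ ?_⟩) (by rwa [hunion])
  · exact hdisj.ne_of_mem h ⟨hqM, hqt'⟩ rfl
  · exact hdisj.ne_of_mem ⟨hpM, hpt⟩ h rfl

theorem exists_connectedComponentIn_separates [PreconnectedSpace X] [LocallyPathConnectedSpace X]
    (hX : HasJaniszewskiProperty X) {A : Set X} (hA : IsClosed A) {x y : X} (hy : y ∉ A)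
    (hsep : Separates A x y) :
    ∃ k ∈ A, Separates (connectedComponentIn A k) x y := by
  obtain ⟨M, hMA, hM⟩ := exists_minimal_separates hA hy hsep
  obtain ⟨k, hk⟩ : M.Nonempty := nonempty_iff_ne_empty.mpr fun h ↦
    not_separates_empty x y (h ▸ hM.prop.2.2)
  have hMk : M ⊆ connectedComponentIn A k :=
    (isPreconnected_of_minimal_separates hX hy hM).subset_connectedComponentIn hk hMA
  exact ⟨k, hMA hk, hM.prop.2.2.mono hMk fun h ↦ hy (connectedComponentIn_subset A k h)⟩

end Separation

namespace Complex

theorem exists_continuous_exp_eq {X : Type*} [TopologicalSpace X] [SimplyConnectedSpace X]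
    [LocallyPathConnectedSpace X] (f : C(X, ℂ)) (hf : ∀ x, f x ≠ 0) :
    ∃ g : C(X, ℂ), ∀ x, exp (g x) = f x := by
  obtain ⟨x₀⟩ := (inferInstance : Nonempty X)
  obtain ⟨g, ⟨-, hg⟩, -⟩ := isCoveringMapOn_exp.existsUnique_continuousMap_lifts f
    (exp_log (hf x₀)) hf
  exact ⟨g, congrFun hg⟩

theorem not_exists_continuousOn_exp_eq_sub (a : ℂ) {R : ℝ} (hR : 0 < R) :
    ¬ ∃ g : ℂ → ℂ, ContinuousOn g (sphere a R) ∧ ∀ z ∈ sphere a R, exp (g z) = z - a := by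
  rintro ⟨g, hg, hexp⟩
  let c : ℝ → ℂ := fun θ ↦ a + R * exp (θ * I)
  have hc : ∀ θ, c θ ∈ sphere a R := fun θ ↦ by
    simp [c, norm_exp_ofReal_mul_I, abs_of_pos hR]
  -- `θ ↦ g (c θ) - θ i` lifts the constant `R` through `exp`, so it is constant.
  have hcont : Continuous fun θ : ℝ ↦ g (c θ) - θ * I :=
    (hg.comp_continuous (by fun_prop) hc).sub (by fun_prop)
  have hconst := isCoveringMap_exp.const_of_comp hcont (fun θ θ' ↦ by
      ext
      simp only [exp_sub, hexp _ (hc _), c, add_sub_cancel_left, mul_div_assoc,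
        div_self (exp_ne_zero _)])
    (2 * Real.pi) 0
  have hc2π : c (2 * Real.pi) = c 0 := by simp [c]
  simp [hc2π, Real.pi_ne_zero, I_ne_zero] at hconst

lemma div_sub_mem_slitPlane {a b z : ℂ} (h : dist a b < dist z b) :
    (z - a) / (z - b) ∈ slitPlane := by
  have hzb : z - b ≠ 0 := by
    rw [sub_ne_zero]
    rintro rfl
    exact (dist_nonneg.trans_lt h).ne' (dist_self z)
  have hratio : (z - a) / (z - b) = 1 + (b - a) / (z - b) := by
    field_simp
    ring
  rw [hratio]
  apply mem_slitPlane_of_norm_lt_one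
  rwa [norm_div, div_lt_one (norm_pos_iff.mpr hzb), ← dist_eq_norm, ← dist_eq_norm, dist_comm]

lemma continuousOn_log_div_sub {K : Set ℂ} {a b : ℂ} (h : ∀ z ∈ K, dist a b < dist z b) :
    ContinuousOn (fun z ↦ log ((z - a) / (z - b))) K := by
  refine ContinuousOn.clog ?_ fun z hz ↦ div_sub_mem_slitPlane (h z hz)
  exact (continuousOn_id.sub continuousOn_const).div (continuousOn_id.sub continuousOn_const)
    fun z hz ↦ (div_ne_zero_iff.mp (slitPlane_ne_zero (div_sub_mem_slitPlane (h z hz)))).2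

lemma tendsto_log_div_sub (a b : ℂ) :
    Tendsto (fun z ↦ log ((z - a) / (z - b))) (cobounded ℂ) (𝓝 0) := by
  have hinv : Tendsto (fun z ↦ (z - b)⁻¹) (cobounded ℂ) (𝓝 0) :=
    tendsto_inv₀_cobounded.comp (tendsto_sub_const_cobounded b)
  have hratio : Tendsto (fun z ↦ (z - a) / (z - b)) (cobounded ℂ) (𝓝 1) := by
    have := (hinv.const_mul (b - a)).const_add 1
    rw [mul_zero, add_zero] at this
    refine this.congr' ?_
    filter_upwards [(tendsto_sub_const_cobounded b).eventually_ne_cobounded 0] with z hz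
    field_simp
    ring
  have := (continuousAt_clog one_mem_slitPlane).tendsto.comp hratio
  rwa [log_one] at this

/-- By Eilenberg's criterion, for closed `K` this holds iff `K` does not separate `a` from `b`. -/
def HasVanishingLogRatio (K : Set ℂ) (a b : ℂ) : Prop :=
  ∃ g : ℂ → ℂ, ContinuousOn g K ∧ (∀ z ∈ K, exp (g z) = (z - a) / (z - b)) ∧
    Tendsto g (cobounded ℂ ⊓ 𝓟 K) (𝓝 0)

namespace HasVanishingLogRatio

variable {K : Set ℂ} {a b c : ℂ}

lemma of_forall_dist_lt (h : ∀ z ∈ K, dist a b < dist z b) : HasVanishingLogRatio K a b := by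
  refine ⟨fun z ↦ log ((z - a) / (z - b)), ?_, fun z hz ↦ ?_,
    (tendsto_log_div_sub a b).mono_left inf_le_left⟩
  · exact continuousOn_log_div_sub h
  · exact exp_log (slitPlane_ne_zero (div_sub_mem_slitPlane (h z hz)))

lemma symm (h : HasVanishingLogRatio K a b) : HasVanishingLogRatio K b a := by
  obtain ⟨g, hg, hexp, hlim⟩ := h
  refine ⟨fun z ↦ -g z, hg.neg, fun z hz ↦ ?_, by simpa using hlim.neg⟩
  rw [exp_neg, hexp z hz, inv_div]

lemma trans (hab : HasVanishingLogRatio K a b) (hbc : HasVanishingLogRatio K b c) (hb : b ∉ K) :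
    HasVanishingLogRatio K a c := by
  obtain ⟨g₁, hg₁, hexp₁, hlim₁⟩ := hab
  obtain ⟨g₂, hg₂, hexp₂, hlim₂⟩ := hbc
  refine ⟨fun z ↦ g₁ z + g₂ z, hg₁.add hg₂, fun z hz ↦ ?_, by simpa using hlim₁.add hlim₂⟩
  have hzb : z - b ≠ 0 := sub_ne_zero.mpr fun h ↦ hb (h ▸ hz)
  rw [exp_add, hexp₁ z hz, hexp₂ z hz, div_mul_div_cancel₀ hzb]

lemma union {P Q : Set ℂ} (hP : IsClosed P) (hQ : IsClosed Q) (hPQ : Disjoint P Q)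
    (h₁ : HasVanishingLogRatio P a b) (h₂ : HasVanishingLogRatio Q a b) :
    HasVanishingLogRatio (P ∪ Q) a b := by
  classical
  obtain ⟨g₁, hg₁, hexp₁, hlim₁⟩ := h₁
  obtain ⟨g₂, hg₂, hexp₂, hlim₂⟩ := h₂
  have hP' : EqOn (P.piecewise g₁ g₂) g₁ P := fun z hz ↦ piecewise_eq_of_mem _ _ _ hz
  have hQ' : EqOn (P.piecewise g₁ g₂) g₂ Q := fun z hz ↦
    piecewise_eq_of_notMem _ _ _ (hPQ.notMem_of_mem_right hz)
  refine ⟨P.piecewise g₁ g₂, (hg₁.congr hP').union_of_isClosed (hg₂.congr hQ') hP hQ, ?_, ?_⟩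
  · rintro z (hz | hz)
    · rw [hP' hz, hexp₁ z hz]
    · rw [hQ' hz, hexp₂ z hz]
  · rw [← sup_principal, inf_sup_left]
    exact (hlim₁.congr' (eventuallyEq_inf_principal_iff.mpr (.of_forall hP'.symm))).sup
      (hlim₂.congr' (eventuallyEq_inf_principal_iff.mpr (.of_forall hQ'.symm)))

lemma of_mem_connectedComponentIn (hK : IsClosed K) (hb : b ∈ connectedComponentIn Kᶜ a) :
    HasVanishingLogRatio K a b := by
  have ha : a ∈ connectedComponentIn Kᶜ a := mem_connectedComponentIn
    (connectedComponentIn_nonempty_iff.mp ⟨b, hb⟩)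
  refine (isPreconnected_connectedComponentIn).induction₂ (fun x y ↦ HasVanishingLogRatio K x y)
    (fun x hx ↦ ?_) (fun x y z _ hy _ hxy hyz ↦ hxy.trans hyz (connectedComponentIn_subset _ _ hy))
    (fun x y _ _ h ↦ h.symm) ha hb
  obtain ⟨ε, hε, hball⟩ := isOpen_iff.mp hK.isOpen_compl x (connectedComponentIn_subset _ _ hx)
  filter_upwards [nhdsWithin_le_nhds (ball_mem_nhds x hε)] with y hy
  refine (of_forall_dist_lt fun z hz ↦ ?_).symm
  exact (mem_ball.mp hy).trans_le (not_lt.mp fun h ↦ hball (mem_ball.mpr h) hz)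

lemma exists_continuousMap_exp_eq (hK : IsClosed K) (h : HasVanishingLogRatio K a b) :
    ∃ (G : C(ℂ, ℂ)) (R : ℝ), ∀ z, z ∈ K ∨ R ≤ ‖z‖ → exp (G z) = (z - a) / (z - b) := by
  classical
  obtain ⟨g, hg, hexp, hlim⟩ := h
  obtain ⟨R₁, hR₁⟩ : ∃ R₁ : ℝ, ∀ z ∈ K, R₁ ≤ ‖z‖ → ‖g z‖ < Real.pi := by
    have := eventually_inf_principal.mp (hlim.eventually (ball_mem_nhds 0 Real.pi_pos))
    obtain ⟨R₁, -, hR₁⟩ := hasBasis_cobounded_norm.eventually_iff.mp this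
    exact ⟨R₁, fun z hzK hz ↦ mem_ball_zero_iff.mp (hR₁ hz hzK)⟩
  obtain ⟨R, hRR₁, hRb⟩ : ∃ R, R₁ ≤ R ∧ ‖b‖ + dist a b + 1 ≤ R :=
    ⟨_, le_max_left _ _, le_max_right _ _⟩
  set T : Set ℂ := {z | R ≤ ‖z‖}
  have hTc : IsClosed T := isClosed_le continuous_const continuous_norm
  have hT : ∀ z ∈ T, dist a b < dist z b := fun z (hz : R ≤ ‖z‖) ↦ by
    have := norm_sub_norm_le z b
    rw [← dist_eq_norm] at this
    linarith
  -- Far out `g` is small, hence it is the principal branch there.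
  have hprincipal : EqOn g (fun z ↦ log ((z - a) / (z - b))) (K ∩ T) := fun z ⟨hzK, hzT⟩ ↦ by
    have hsmall := (abs_im_le_norm (g z)).trans_lt (hR₁ z hzK (hRR₁.trans hzT))
    dsimp only
    rw [← hexp z hzK, log_exp (neg_lt_of_abs_lt hsmall) (lt_of_abs_lt hsmall).le]
  set f := K.piecewise g fun z ↦ log ((z - a) / (z - b))
  have hf : ContinuousOn f (K ∪ T) := by
    refine (hg.congr fun z hz ↦ piecewise_eq_of_mem _ _ _ hz).union_of_isClosed
      ((continuousOn_log_div_sub hT).congr fun z hz ↦ ?_) hK hTc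
    by_cases hzK : z ∈ K
    · simp only [f, piecewise_eq_of_mem _ _ _ hzK, hprincipal ⟨hzK, hz⟩]
    · simp only [f, piecewise_eq_of_notMem _ _ _ hzK]
  obtain ⟨G, hG⟩ := ContinuousMap.exists_restrict_eq
    (hK.union hTc) ⟨_, hf.domRestrict⟩
  refine ⟨G, R, fun z hz ↦ ?_⟩
  rw [show G z = f z from DFunLike.congr_fun hG ⟨z, hz⟩]
  by_cases hzK : z ∈ K
  · rw [show f z = g z from piecewise_eq_of_mem _ _ _ hzK, hexp z hzK]
  · rw [show f z = _ from piecewise_eq_of_notMem _ _ _ hzK,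
      exp_log (slitPlane_ne_zero (div_sub_mem_slitPlane (hT z (hz.resolve_left hzK))))]

end HasVanishingLogRatio

lemma connectedComponentIn_eq_of_exp_eq {K : Set ℂ} (hK : IsClosed K) {a b : ℂ} (G : C(ℂ, ℂ))
    (R : ℝ) (hG : ∀ z, z ∈ K ∨ R ≤ ‖z‖ → exp (G z) = (z - a) / (z - b)) :
    connectedComponentIn Kᶜ a = connectedComponentIn Kᶜ b := by
  classical
  by_contra hne
  set U := connectedComponentIn Kᶜ a
  have hmul : ∀ z, z ∈ K ∨ R ≤ ‖z‖ → (z - b) * exp (G z) = z - a := fun z hz ↦ by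
    have hzb : z - b ≠ 0 := fun h0 ↦ exp_ne_zero (G z) (by rw [hG z hz, h0, div_zero])
    rw [hG z hz, mul_div_cancel₀ _ hzb]
  have haU : a ∈ U := mem_connectedComponentIn fun ha ↦
    exp_ne_zero (G a) (by rw [hG a (.inl ha), sub_self, zero_div])
  have hbU : b ∉ U := fun hb ↦ hne (connectedComponentIn_eq hb)
  -- Glue `(z - b) exp (G z)` on `U` to `z - a` outside: they agree on `frontier U ⊆ K`.
  let Φ : ℂ → ℂ := fun z ↦ if z ∈ U then (z - b) * exp (G z) else z - a
  have hΦ : Continuous Φ := Continuous.if (fun z hz ↦ hmul z (.inl (by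
    simpa using hK.isOpen_compl.frontier_connectedComponentIn_subset a hz))) (by fun_prop)
    (by fun_prop)
  have hΦ0 : ∀ z, Φ z ≠ 0 := fun z ↦ by
    by_cases hz : z ∈ U
    · simpa [Φ, hz, sub_eq_zero] using ne_of_mem_of_not_mem hz hbU
    · simpa [Φ, hz, sub_eq_zero] using (ne_of_mem_of_not_mem haU hz).symm
  obtain ⟨Λ, hΛ⟩ := exists_continuous_exp_eq ⟨Φ, hΦ⟩ hΦ0
  refine not_exists_continuousOn_exp_eq_sub a (R := |R| + ‖a‖ + 1) (by positivity)
    ⟨Λ, Λ.continuous.continuousOn, fun z hz ↦ ?_⟩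
  have hzR : R ≤ ‖z‖ := by
    have := norm_sub_le z a
    rw [← dist_eq_norm, mem_sphere.mp hz] at this
    linarith [le_abs_self R]
  rw [hΛ]
  by_cases hzU : z ∈ U
  · simp [Φ, hzU, hmul z (.inr hzR)]
  · simp [Φ, hzU]

theorem hasJaniszewskiProperty : HasJaniszewskiProperty ℂ := by
  intro P Q hP hQ hPQ x y hy hsP hsQ
  have hlog : ∀ {S : Set ℂ}, IsClosed S → y ∉ S → ¬ Separates S x y →
      HasVanishingLogRatio S x y := fun hS hyS hsep ↦
    .of_mem_connectedComponentIn hS (not_not.mp hsep ▸ mem_connectedComponentIn hyS)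
  obtain ⟨G, R, hG⟩ := ((hlog hP (fun h ↦ hy (.inl h)) hsP).union hP hQ hPQ
    (hlog hQ (fun h ↦ hy (.inr h)) hsQ)).exists_continuousMap_exp_eq (hP.union hQ)
  exact not_not.mpr (connectedComponentIn_eq_of_exp_eq (hP.union hQ) G R hG)

end Complex

theorem stmt_0_general (A : Set (ℝ × ℝ)) (hA : IsClosed A) (x y : ℝ × ℝ)
    (hy : y ∉ A)
    (hsep : connectedComponentIn Aᶜ x ≠ connectedComponentIn Aᶜ y) :
    ∃ k ∈ A, connectedComponentIn (connectedComponentIn A k)ᶜ x ≠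
      connectedComponentIn (connectedComponentIn A k)ᶜ y :=
  exists_connectedComponentIn_separates
    (Complex.hasJaniszewskiProperty.of_homeomorph Complex.equivRealProdCLM.toHomeomorph)
    hA hy hsep

/-- Lemma 2.5 of the paper. If a closed subset `A` of the plane separates
two points `x` and `y` (i.e. they lie in different connected components of the complement),
then some connected component of `A` already separates `x` and `y`. -/
theorem stmt_0 (A : Set (ℝ × ℝ)) (hA : IsClosed A) (x y : ℝ × ℝ)
    (hx : x ∉ A) (hy : y ∉ A)
    (hsep : connectedComponentIn Aᶜ x ≠ connectedComponentIn Aᶜ y) :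
    ∃ k ∈ A, connectedComponentIn (connectedComponentIn A k)ᶜ x ≠
      connectedComponentIn (connectedComponentIn A k)ᶜ y :=
  stmt_0_general A hA x y hy hsep
end

section
/- Let A be a closed subset of ℝ², and let x, y ∈ ℝ² ∖ A lie in different connected components of ℝ² ∖ A. Let U be the connected component of ℝ² ∖ A containing x. Then y does not belong to the closure of U; and if V denotes the connected component of ℝ² ∖ closure(U) containing y, then the frontier Fr V is a connected subset of A, and x and y lie in different connected components of ℝ² ∖ Fr V. -/
/-!
The plane is unicoherent: if it is the union of two closed connected sets `K` and `L`, then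
`K ∩ L` is connected. Otherwise an Urysohn function `w` separating two pieces of `K ∩ L` gives a
nonvanishing map equal to `exp (2πi w)` on `K` and to `1` on `L`. Since `ℝ²` is simply connected it
has a continuous logarithm, which must differ from `2πi w` by a constant on `K` and be constant on
`L`; evaluating at one point of each piece gives `2πi = 0`.

With `C = closure U` and `K = closure V`, `L = Vᶜ` (connected, being `C` together with the closures
of the other components of `Cᶜ`), this shows that `frontier V = K ∩ L` is connected. It lies in `A`
because `V` avoids the open set `U`, and it separates `y ∈ V` from `x ∈ C`.
-/

open Set Complex

theorem exists_continuous_exp_eq {X : Type*} [TopologicalSpace X] [SimplyConnectedSpace X]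
    [LocallyPathConnectedSpace X] {f : X → ℂ} (hf : Continuous f) (hf0 : ∀ z, f z ≠ 0) :
    ∃ g : X → ℂ, Continuous g ∧ ∀ z, exp (g z) = f z := by
  obtain ⟨z₀⟩ := (inferInstance : Nonempty X)
  obtain ⟨g, ⟨-, hg⟩, -⟩ := isCoveringMapOn_exp.existsUnique_continuousMap_lifts ⟨f, hf⟩
    (exp_log (hf0 z₀)) (a₀ := z₀) hf0
  exact ⟨g, g.continuous, congrFun hg⟩

theorem IsPreconnected.eq_of_exp_eq_one {X : Type*} [TopologicalSpace X] {s : Set X}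
    (hs : IsPreconnected s) {d : X → ℂ} (hd : ContinuousOn d s) (h1 : ∀ z ∈ s, exp (d z) = 1)
    {a b : X} (ha : a ∈ s) (hb : b ∈ s) : d a = d b := by
  refine hs.constant_of_mapsTo (T := AddSubgroup.zmultiples (2 * Real.pi * I))
    (isDiscrete_iff_discreteTopology.mpr (NormedSpace.discreteTopology_zmultiples _)) hd
    (fun z hz => ?_) ha hb
  obtain ⟨n, hn⟩ := exp_eq_one_iff.mp (h1 z hz)
  exact AddSubgroup.mem_zmultiples_iff.mpr ⟨n, by rw [hn, zsmul_eq_mul]⟩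

theorem isPreconnected_inter_of_union_eq_univ {X : Type*} [TopologicalSpace X]
    [SimplyConnectedSpace X] [LocallyPathConnectedSpace X] [NormalSpace X] {K L : Set X}
    (hK : IsClosed K) (hL : IsClosed L) (hKc : IsPreconnected K) (hLc : IsPreconnected L)
    (hKL : K ∪ L = univ) : IsPreconnected (K ∩ L) := by
  classical
  rw [isPreconnected_iff_subset_of_fully_disjoint_closed (hK.inter hL)]
  intro u v hu hv hsub huv
  by_contra! h
  obtain ⟨z₁, hz₁, hz₁v⟩ := not_subset.mp h.2
  obtain ⟨z₂, hz₂, hz₂u⟩ := not_subset.mp h.1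
  obtain ⟨w, hw₀, hw₁, -⟩ := exists_continuous_zero_one_of_isClosed hu hv huv
  set e : X → ℂ := fun z => 2 * Real.pi * I * w z with he
  have he_cont : Continuous e := by fun_prop
  have he_KL : ∀ z ∈ K ∩ L, exp (e z) = 1 := by
    intro z hz
    rcases hsub hz with hzu | hzv
    · simp [he, hw₀ hzu]
    · simp [he, hw₁ hzv]
  have hK_compl : Kᶜ ⊆ L := fun z hz => (hKL.symm ▸ mem_univ z).resolve_left hz
  have hfrontier : frontier K ⊆ K ∩ L := fun z hz =>
    ⟨hK.frontier_subset hz, hL.closure_subset_iff.mpr hK_compl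
      ((frontier_compl K).symm.subset.trans frontier_subset_closure hz)⟩
  -- `f = exp ∘ e` on `K` and `1` on `L` glue along `K ∩ L`, where `e` takes values in `2πiℤ`.
  set f : X → ℂ := K.piecewise (fun z => exp (e z)) 1 with hf
  have hf_cont : Continuous f :=
    Continuous.piecewise (fun z hz => he_KL z (hfrontier hz)) (by fun_prop) continuous_const
  obtain ⟨g, hg, hgf⟩ := exists_continuous_exp_eq hf_cont
    (fun z => by by_cases hz : z ∈ K <;> simp [hf, hz, exp_ne_zero])
  have hL_const : g z₁ = g z₂ := by
    refine hLc.eq_of_exp_eq_one hg.continuousOn (fun z hz => ?_) hz₁.2 hz₂.2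
    by_cases hzK : z ∈ K
    · rw [hgf, hf, piecewise_eq_of_mem _ _ _ hzK, he_KL z ⟨hzK, hz⟩]
    · rw [hgf, hf, piecewise_eq_of_notMem _ _ _ hzK, Pi.one_apply]
  have hK_const : g z₁ - e z₁ = g z₂ - e z₂ := by
    refine hKc.eq_of_exp_eq_one (d := fun z => g z - e z) (hg.sub he_cont).continuousOn
      (fun z hz => ?_) hz₁.1 hz₂.1
    rw [exp_sub, hgf, hf, piecewise_eq_of_mem _ _ _ hz, div_self (exp_ne_zero _)]
  have he₁ : e z₁ = 0 := by simp [he, hw₀ ((hsub hz₁).resolve_right hz₁v)]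
  have he₂ : e z₂ = 2 * Real.pi * I := by simp [he, hw₁ ((hsub hz₂).resolve_left hz₂u)]
  exact two_pi_I_ne_zero (by linear_combination hK_const - hL_const + he₁ - he₂)

theorem closure_connectedComponentIn_inter {X : Type*} [TopologicalSpace X] (s : Set X) (x : X) :
    closure (connectedComponentIn s x) ∩ s = connectedComponentIn s x := by
  by_cases hx : x ∈ s
  · refine Subset.antisymm ?_ (subset_inter subset_closure (connectedComponentIn_subset s x))
    have hpre : IsPreconnected (closure (connectedComponentIn s x) ∩ s) :=
      isPreconnected_connectedComponentIn.subset_closure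
        (subset_inter subset_closure (connectedComponentIn_subset s x)) inter_subset_left
    exact hpre.subset_connectedComponentIn ⟨subset_closure (mem_connectedComponentIn hx), hx⟩
      inter_subset_right
  · simp [connectedComponentIn_eq_empty hx]

theorem IsClosed.frontier_connectedComponentIn_compl_subset {X : Type*} [TopologicalSpace X]
    [LocallyConnectedSpace X] {C : Set X} (hC : IsClosed C) (y : X) :
    frontier (connectedComponentIn Cᶜ y) ⊆ C := by
  intro z hz
  by_contra hzC
  rw [hC.isOpen_compl.connectedComponentIn.frontier_eq] at hz
  exact hz.2 (closure_connectedComponentIn_inter Cᶜ y ▸ ⟨hz.1, hzC⟩)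

theorem isPreconnected_compl_connectedComponentIn_compl {X : Type*}
    [TopologicalSpace X] [LocallyConnectedSpace X] [PreconnectedSpace X] {C : Set X}
    (hC : IsClosed C) (hCc : IsPreconnected C) (hCne : C.Nonempty) (y : X) :
    IsPreconnected (connectedComponentIn Cᶜ y)ᶜ := by
  obtain ⟨c, hc⟩ := hCne
  have hC_sub : C ⊆ (connectedComponentIn Cᶜ y)ᶜ := fun z hz hzV =>
    connectedComponentIn_subset _ _ hzV hz
  refine isPreconnected_of_forall c fun z hz => ?_
  by_cases hzC : z ∈ C
  · exact ⟨C, hC_sub, hc, hzC, hCc⟩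
  set W := connectedComponentIn Cᶜ z
  have hzW : z ∈ W := mem_connectedComponentIn hzC
  obtain ⟨p, hp⟩ : (frontier W).Nonempty :=
    nonempty_frontier_iff.mpr
      ⟨⟨z, hzW⟩, fun h => connectedComponentIn_subset Cᶜ z (h.superset (mem_univ c)) hc⟩
  have hW_sub : closure W ⊆ (connectedComponentIn Cᶜ y)ᶜ := by
    intro q hq hqV
    have hqW : q ∈ W := (closure_connectedComponentIn_inter Cᶜ z).subset
      ⟨hq, connectedComponentIn_subset _ _ hqV⟩
    exact hz (connectedComponentIn_eq hqV ▸ connectedComponentIn_eq hqW ▸ hzW)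
  exact ⟨C ∪ closure W, union_subset hC_sub hW_sub, Or.inl hc, Or.inr (subset_closure hzW),
    hCc.union p (hC.frontier_connectedComponentIn_compl_subset z hp) (frontier_subset_closure hp)
      isPreconnected_connectedComponentIn.closure⟩

theorem isConnected_frontier_connectedComponentIn_compl {X : Type*} [TopologicalSpace X]
    [SimplyConnectedSpace X] [LocallyPathConnectedSpace X] [NormalSpace X] {C : Set X}
    (hC : IsClosed C) (hCc : IsPreconnected C) (hCne : C.Nonempty) {y : X} (hy : y ∉ C) :
    IsConnected (frontier (connectedComponentIn Cᶜ y)) := by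
  set V := connectedComponentIn Cᶜ y
  have hV : IsOpen V := hC.isOpen_compl.connectedComponentIn
  obtain ⟨c, hc⟩ := hCne
  refine ⟨nonempty_frontier_iff.mpr ⟨⟨y, mem_connectedComponentIn hy⟩,
    fun h => connectedComponentIn_subset Cᶜ y (h.superset (mem_univ c)) hc⟩, ?_⟩
  rw [hV.frontier_eq, sdiff_eq]
  exact isPreconnected_inter_of_union_eq_univ isClosed_closure hV.isClosed_compl
    isPreconnected_connectedComponentIn.closure
    (isPreconnected_compl_connectedComponentIn_compl hC hCc ⟨c, hc⟩ y)
    (eq_univ_of_univ_subset fun z _ => (em (z ∈ V)).imp (fun h => subset_closure h) id)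

theorem IsPreconnected.subset_of_disjoint_frontier {X : Type*} [TopologicalSpace X]
    {S V : Set X} (hS : IsPreconnected S) (hV : IsOpen V) (hSV : (S ∩ V).Nonempty)
    (hd : Disjoint S (frontier V)) : S ⊆ V := by
  refine hS.subset_left_of_subset_union hV isClosed_closure.isOpen_compl
    (disjoint_compl_right.mono_right (compl_subset_compl.mpr subset_closure)) ?_ hSV
  intro z hz
  by_contra h
  simp only [mem_union, mem_compl_iff, not_or, not_not] at h
  exact hd.notMem_of_mem_left hz (hV.frontier_eq ▸ ⟨h.2, h.1⟩)

/-- refined claim in the proof of Lemma 2.5. Let `A ⊆ ℝ²` be closed and let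
`x, y ∉ A` lie in different connected components of `Aᶜ`. Let `U` be the component of `Aᶜ`
containing `x`, and `V` the component of `(closure U)ᶜ` containing `y`. Then `y ∉ closure U`,
the frontier of `V` is a connected subset of `A`, and `x` and `y` lie in different connected
components of the complement of `frontier V`. -/
theorem stmt_1 (A : Set (ℝ × ℝ)) (hA : IsClosed A) (x y : ℝ × ℝ)
    (hx : x ∉ A) (hy : y ∉ A)
    (hsep : connectedComponentIn Aᶜ x ≠ connectedComponentIn Aᶜ y)
    (U V : Set (ℝ × ℝ))
    (hU : U = connectedComponentIn Aᶜ x)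
    (hV : V = connectedComponentIn (closure U)ᶜ y) :
    y ∉ closure U ∧
    IsConnected (frontier V) ∧
    frontier V ⊆ A ∧
    x ∉ frontier V ∧ y ∉ frontier V ∧
    connectedComponentIn (frontier V)ᶜ x ≠ connectedComponentIn (frontier V)ᶜ y := by
  have hx_closure : x ∈ closure U := subset_closure (hU ▸ mem_connectedComponentIn hx)
  have hy_closure : y ∉ closure U := fun h => hsep (connectedComponentIn_eq
    ((closure_connectedComponentIn_inter Aᶜ x).subset ⟨hU ▸ h, hy⟩))
  have hV_sub : V ⊆ (closure U)ᶜ := hV ▸ connectedComponentIn_subset _ _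
  have hfrontier_U : frontier V ⊆ closure U :=
    hV ▸ isClosed_closure.frontier_connectedComponentIn_compl_subset y
  have hfrontier_A : frontier V ⊆ A := by
    intro z hz
    by_contra hzA
    have hzU : z ∈ U := hU ▸ (closure_connectedComponentIn_inter Aᶜ x).subset
      ⟨hU ▸ hfrontier_U hz, hzA⟩
    have hUV : Disjoint (closure V) U :=
      Disjoint.closure_left (disjoint_compl_left.mono_left (hV_sub.trans
        (compl_subset_compl.mpr subset_closure))) (hU ▸ hA.isOpen_compl.connectedComponentIn)
    exact hUV.notMem_of_mem_right hzU (frontier_subset_closure hz)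
  have hx_frontier : x ∉ frontier V := fun h => hx (hfrontier_A h)
  have hy_frontier : y ∉ frontier V := fun h => hy (hfrontier_A h)
  refine ⟨hy_closure, hV ▸ isConnected_frontier_connectedComponentIn_compl isClosed_closure
    (hU ▸ isPreconnected_connectedComponentIn.closure) ⟨x, hx_closure⟩ hy_closure, hfrontier_A,
    hx_frontier, hy_frontier, ?_⟩
  intro heq
  have hsub : connectedComponentIn (frontier V)ᶜ y ⊆ V :=
    isPreconnected_connectedComponentIn.subset_of_disjoint_frontier
      (hV ▸ isClosed_closure.isOpen_compl.connectedComponentIn)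
      ⟨y, mem_connectedComponentIn hy_frontier, hV ▸ mem_connectedComponentIn hy_closure⟩
      (disjoint_compl_left.mono_left (connectedComponentIn_subset _ _))
  exact hV_sub (hsub (heq ▸ mem_connectedComponentIn hx_frontier)) hx_closure
end

section
/- Let (U_i)_{i ∈ ℕ} be a sequence of pairwise disjoint nonempty open subsets of ℝ², and for each i let x_i ∈ U_i. Suppose the sequence (x_i) converges to a point x ∈ ℝ². Then x ∉ ⋃_i U_i, and for each i there exists a point y_i in the frontier Fr U_i such that the sequence (y_i) converges to x. -/
/-!
A limit of points taken from pairwise disjoint open sets lies in none of them, since an open set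
containing it would capture the tail of the sequence. So the segment from `x i` to the limit `x₀`
joins a point of `U i` to a point outside it, and being connected it crosses `frontier (U i)` at
some `y i`, which is no farther from `x₀` than `x i` is.
-/

open Filter Topology

theorem IsPreconnected.inter_frontier_nonempty {X : Type*} [TopologicalSpace X] {s t : Set X}
    (hs : IsPreconnected s) (hin : (s ∩ t).Nonempty) (hout : (s \ t).Nonempty) :
    (s ∩ frontier t).Nonempty := by
  obtain ⟨a, has, hat⟩ := hin
  obtain ⟨b, hbs, hbt⟩ := hout
  have := isPreconnected_iff_preconnectedSpace.mp hs
  obtain ⟨z, hz⟩ : (frontier (((↑) : s → X) ⁻¹' t)).Nonempty := nonempty_frontier_iff.mpr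
    ⟨⟨⟨a, has⟩, hat⟩, (Set.ne_univ_iff_exists_notMem _).mpr ⟨⟨b, hbs⟩, hbt⟩⟩
  exact ⟨z, z.2, continuous_subtype_val.frontier_preimage_subset t hz⟩

theorem exists_mem_frontier_dist_le {E : Type*} [SeminormedAddCommGroup E] [NormedSpace ℝ E]
    {s : Set E} {x y : E} (hx : x ∈ s) (hy : y ∉ s) :
    ∃ z ∈ frontier s, dist z y ≤ dist x y := by
  obtain ⟨z, hzseg, hzs⟩ := (convex_segment x y).isPreconnected.inter_frontier_nonempty
    ⟨x, left_mem_segment ℝ x y, hx⟩ ⟨y, right_mem_segment ℝ x y, hy⟩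
  refine ⟨z, hzs, ?_⟩
  linarith [dist_add_dist_of_mem_segment hzseg, dist_nonneg (x := x) (y := z)]

theorem notMem_iUnion_of_tendsto_of_pairwise_disjoint {X : Type*} [TopologicalSpace X]
    {U : ℕ → Set X} (hopen : ∀ i, IsOpen (U i)) (hdisj : Pairwise (Function.onFun Disjoint U))
    {x : ℕ → X} (hx : ∀ i, x i ∈ U i) {x₀ : X} (hlim : Tendsto x atTop (𝓝 x₀)) :
    x₀ ∉ ⋃ i, U i := by
  rintro ⟨_, ⟨j, rfl⟩, hj⟩
  obtain ⟨i, hij, hi⟩ :=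
    ((eventually_gt_atTop j).and (hlim.eventually ((hopen j).mem_nhds hj))).exists
  exact (hdisj hij.ne').le_bot ⟨hx i, hi⟩

theorem stmt_2_general (U : ℕ → Set (ℝ × ℝ))
    (hopen : ∀ i, IsOpen (U i))
    (hdisj : Pairwise (Function.onFun Disjoint U))
    (x : ℕ → ℝ × ℝ) (hx : ∀ i, x i ∈ U i)
    (x₀ : ℝ × ℝ) (hlim : Tendsto x atTop (𝓝 x₀)) :
    x₀ ∉ ⋃ i, U i ∧
    ∃ y : ℕ → ℝ × ℝ, (∀ i, y i ∈ frontier (U i)) ∧ Tendsto y atTop (𝓝 x₀) := by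
  have hx₀ := notMem_iUnion_of_tendsto_of_pairwise_disjoint hopen hdisj hx hlim
  choose y hy hdist using fun i =>
    exists_mem_frontier_dist_le (hx i) fun h => hx₀ (Set.mem_iUnion_of_mem i h)
  refine ⟨hx₀, y, hy, tendsto_iff_dist_tendsto_zero.mpr ?_⟩
  exact squeeze_zero (fun _ => dist_nonneg) hdist (tendsto_iff_dist_tendsto_zero.mp hlim)

/-- topological core of Case 1 in the proof of Lemma 2.2. If `(U i)` are
pairwise disjoint nonempty open subsets of the plane, `x i ∈ U i` for each `i`, and the
sequence `x i` converges to `x₀`, then `x₀` lies in none of the `U i`, and one can choose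
points `y i ∈ frontier (U i)` converging to `x₀`. -/
theorem stmt_2 (U : ℕ → Set (ℝ × ℝ))
    (hopen : ∀ i, IsOpen (U i))
    (hne : ∀ i, (U i).Nonempty)
    (hdisj : Pairwise (Function.onFun Disjoint U))
    (x : ℕ → ℝ × ℝ) (hx : ∀ i, x i ∈ U i)
    (x₀ : ℝ × ℝ) (hlim : Tendsto x atTop (𝓝 x₀)) :
    x₀ ∉ ⋃ i, U i ∧
    ∃ y : ℕ → ℝ × ℝ, (∀ i, y i ∈ frontier (U i)) ∧ Tendsto y atTop (𝓝 x₀) :=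
  stmt_2_general U hopen hdisj x hx x₀ hlim
end

section
/- Identify the circle S¹ with ℝ/ℤ with its standard circular order, and for a ≠ c let (a,c) denote the open interval of points b such that (a,b,c) is positively ordered. Let 𝒜 be a family of subsets of S¹ such that no two distinct members of 𝒜 link, and let x ∈ S¹. Then at most one member A ∈ 𝒜 contains a sequence (a_i) in S¹ ∖ {x} approaching x monotonically in the positive direction, i.e. with a_i → x in S¹ and a_{i+1} ∈ (a_i, x) for all i. -/
open Filter Topology

/-- `(a, b, c)` is positively ordered on the circle `ℝ/ℤ`: there are lifts
`ã < b̃ < c̃ < ã + 1` in `ℝ`. -/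
def PosOrdered (a b c : UnitAddCircle) : Prop :=
  ∃ x y z : ℝ, (x : UnitAddCircle) = a ∧ (y : UnitAddCircle) = b ∧ (z : UnitAddCircle) = c ∧
    x < y ∧ y < z ∧ z < x + 1

/-- The open interval `(a, c)` on the circle: the set of `b` with `(a, b, c)` positively
ordered. -/
def OInterval (a c : UnitAddCircle) : Set UnitAddCircle :=
  {b | PosOrdered a b c}

/-- Two subsets `A`, `B` of the circle *link* if there are `a, a' ∈ A` and `b, b' ∈ B` with
`b ∈ (a, a')` and `b' ∈ (a', a)`. -/
def Links (A B : Set UnitAddCircle) : Prop :=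
  ∃ a ∈ A, ∃ a' ∈ A, ∃ b ∈ B, ∃ b' ∈ B, b ∈ OInterval a a' ∧ b' ∈ OInterval a' a

/-- `A` contains a sequence in `S¹ ∖ {x}` approaching `x` monotonically in the positive
direction. -/
def ApproachesPos (A : Set UnitAddCircle) (x : UnitAddCircle) : Prop :=
  ∃ a : ℕ → UnitAddCircle, (∀ i, a i ∈ A) ∧ (∀ i, a i ≠ x) ∧
    Tendsto a atTop (𝓝 x) ∧ ∀ i, a (i + 1) ∈ OInterval (a i) x

open Set

/-! Lift `x` to `r : ℝ` and every other point of the circle to `(r - 1, r)`. The lifts of a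
sequence approaching `x` in the positive direction increase strictly, and their limit is a lift
of `x`, hence equals `r`; so a set approaching `x` has points lifting into every interval
`(c, r)`. Picking alternately `a < b < a' < b' < r` from `A` and `B`, with `r - 1 < a`, gives
`b ∈ (a, a')` and `b' ∈ (a', a + 1) = (a', a)`: the two sets link. -/

lemma AddCircle.exists_coe_eq_mem_Ioo_of_ne {p : ℝ} [Fact (0 < p)] {r : ℝ} {y : AddCircle p}
    (hy : y ≠ r) : ∃ s ∈ Ioo (r - p) r, (s : AddCircle p) = y := by
  obtain ⟨⟨s, hs₁, hs₂⟩, hs⟩ : ∃ s : Ioc (r - p) (r - p + p), (s : AddCircle p) = y :=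
    ⟨AddCircle.equivIoc p (r - p) y, AddCircle.coe_equivIoc⟩
  refine ⟨s, ⟨hs₁, lt_of_le_of_ne (by linarith) ?_⟩, hs⟩
  rintro rfl
  exact hy hs.symm

lemma lt_of_coe_mem_OInterval {r s t : ℝ} (hs : s ∈ Ioo (r - 1) r) (ht : t ∈ Ioo (r - 1) r)
    (h : (t : UnitAddCircle) ∈ OInterval s r) : s < t := by
  obtain ⟨u, v, w, hu, hv, hw, huv, hvw, hwu⟩ := h
  -- translating by the integer `u - s` turns the lifts `v`, `w` into `t`, `r`
  have shift (z : ℝ) : ((z - (u - s) : ℝ) : UnitAddCircle) = z := by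
    rw [QuotientAddGroup.mk_sub, QuotientAddGroup.mk_sub, hu, sub_self, sub_zero]
  have hw' : w - (u - s) = r :=
    (AddCircle.coe_eq_coe_iff_of_mem_Ioc (a := s) ⟨by linarith, by linarith⟩
      ⟨hs.2, by linarith [hs.1]⟩).1 ((shift w).trans hw)
  have hv' : v - (u - s) = t :=
    (AddCircle.coe_eq_coe_iff_of_mem_Ioc (a := r - 1) ⟨by linarith [hs.1], by linarith⟩
      ⟨ht.1, by linarith [ht.2]⟩).1 ((shift v).trans hv)
  linarith

lemma ApproachesPos.frequently_nhdsLT {A : Set UnitAddCircle} {r : ℝ} (h : ApproachesPos A r) :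
    ∃ᶠ s : ℝ in 𝓝[<] r, (s : UnitAddCircle) ∈ A := by
  obtain ⟨a, haA, hne, hlim, hstep⟩ := h
  choose t ht hta using fun i => AddCircle.exists_coe_eq_mem_Ioo_of_ne (hne i)
  have hmono : StrictMono t := strictMono_nat_of_lt_succ fun i =>
    lt_of_coe_mem_OInterval (ht i) (ht (i + 1)) (by rw [hta, hta]; exact hstep i)
  have hbdd : BddAbove (range t) := ⟨r, forall_mem_range.2 fun i => (ht i).2.le⟩
  have hsup := tendsto_atTop_ciSup hmono.monotone hbdd
  have hsup_eq : ⨆ i, t i = r := by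
    have hcoe : ((⨆ i, t i : ℝ) : UnitAddCircle) = r :=
      tendsto_nhds_unique (((AddCircle.continuous_mk' 1).tendsto _).comp hsup)
        (by rwa [← funext hta] at hlim)
    exact (AddCircle.coe_eq_coe_iff_of_mem_Ioc (a := r - 1)
      ⟨(ht 0).1.trans_le (le_ciSup hbdd 0), (ciSup_le fun i => (ht i).2.le).trans_eq (by ring)⟩
      ⟨by linarith, by linarith⟩).1 hcoe
  rw [hsup_eq] at hsup
  have hlift : Tendsto t atTop (𝓝[<] r) :=
    tendsto_nhdsWithin_iff.2 ⟨hsup, Eventually.of_forall fun i => (ht i).2⟩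
  exact hlift.frequently <| Frequently.of_forall fun i =>
    show (t i : UnitAddCircle) ∈ A from (hta i).symm ▸ haA i

lemma links_of_frequently_nhdsLT {A B : Set UnitAddCircle} {r : ℝ}
    (hA : ∃ᶠ s : ℝ in 𝓝[<] r, (s : UnitAddCircle) ∈ A)
    (hB : ∃ᶠ s : ℝ in 𝓝[<] r, (s : UnitAddCircle) ∈ B) : Links A B := by
  rw [(nhdsLT_basis r).frequently_iff] at hA hB
  obtain ⟨a, ⟨ha₁, ha₂⟩, haA⟩ := hA (r - 1) (by linarith)
  obtain ⟨b, ⟨hb₁, hb₂⟩, hbB⟩ := hB a ha₂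
  obtain ⟨a', ⟨ha'₁, ha'₂⟩, ha'A⟩ := hA b hb₂
  obtain ⟨b', ⟨hb'₁, hb'₂⟩, hb'B⟩ := hB a' ha'₂
  exact ⟨a, haA, a', ha'A, b, hbB, b', hb'B, ⟨a, b, a', rfl, rfl, rfl, hb₁, ha'₁, by linarith⟩,
    ⟨a', b', a + 1, rfl, rfl, AddCircle.coe_add_period 1 a, hb'₁, by linarith, by linarith⟩⟩

/-- claim in the proof of Lemma 2.9. In a family of pairwise nonlinking
subsets of the circle, at most one member contains a sequence approaching a given point `x`
monotonically in the positive direction. -/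
theorem stmt_5 (𝒜 : Set (Set UnitAddCircle))
    (hnl : ∀ A ∈ 𝒜, ∀ B ∈ 𝒜, A ≠ B → ¬ Links A B)
    (x : UnitAddCircle) :
    ∀ A ∈ 𝒜, ∀ B ∈ 𝒜, ApproachesPos A x → ApproachesPos B x → A = B := by
  intro A hA B hB hAx hBx
  obtain ⟨r, rfl⟩ := QuotientAddGroup.mk_surjective x
  by_contra hne
  exact hnl A hA B hB hne (links_of_frequently_nhdsLT hAx.frequently_nhdsLT hBx.frequently_nhdsLT)
end
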